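/- arXiv:2112.01721 — 6 statements merged into one kernel-verified Lean document; each statement's English description precedes it below -/
import Mathlib

section
/- If N is a nonnegative square real matrix and M is a nonnegative matrix of the same size with M ≤ N entrywise, then the spectral radius of M is at most the spectral radius of N. -/
/-!
For `0 ≤ M ≤ N` entrywise, induction gives `0 ≤ M ^ k ≤ N ^ k` entrywise, so
`‖M ^ k‖ ≤ ‖N ^ k‖` in the `ℓ∞` operator norm, which only depends on the absolute values of the
entries. Gelfand's formula `ρ(A) = lim ‖A ^ k‖ ^ (1 / k)` then yields `ρ(M) ≤ ρ(N)`.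
-/

/-- The spectral radius of a real square matrix: the maximum of the complex moduli
of its eigenvalues (roots of the characteristic polynomial over ℂ). -/
noncomputable def specRad {m : Type*} [Fintype m] [DecidableEq m] (M : Matrix m m ℝ) : ℝ :=
  sSup {r : ℝ | ∃ μ : ℂ, (M.map (fun x => (x : ℂ))).charpoly.IsRoot μ ∧ r = ‖μ‖}

open Filter
open scoped ENNReal

theorem spectralRadius_le_of_forall_nnnorm_pow_le {A : Type*} [NormedRing A] [NormedAlgebra ℂ A]
    [CompleteSpace A] {a b : A} (h : ∀ k : ℕ, ‖a ^ k‖₊ ≤ ‖b ^ k‖₊) :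
    spectralRadius ℂ a ≤ spectralRadius ℂ b :=
  calc spectralRadius ℂ a ≤ atTop.liminf fun k : ℕ => (‖a ^ k‖₊ : ℝ≥0∞) ^ (1 / k : ℝ) :=
        spectrum.spectralRadius_le_liminf_pow_nnnorm_pow_one_div ℂ a
    _ ≤ atTop.liminf fun k : ℕ => (‖b ^ k‖₊ : ℝ≥0∞) ^ (1 / k : ℝ) :=
        liminf_le_liminf (.of_forall fun k => by gcongr; exact h k)
    _ = spectralRadius ℂ b :=
        (spectrum.pow_nnnorm_pow_one_div_tendsto_nhds_spectralRadius b).liminf_eq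

namespace Matrix

attribute [local instance] Matrix.linftyOpSeminormedAddCommGroup Matrix.linftyOpNormedRing
  Matrix.linftyOpNormedAlgebra

theorem linfty_opNNNorm_mono {m n α : Type*} [Fintype m] [Fintype n] [SeminormedAddCommGroup α]
    {A B : Matrix m n α} (h : ∀ i j, ‖A i j‖₊ ≤ ‖B i j‖₊) : ‖A‖₊ ≤ ‖B‖₊ := by
  simp only [linfty_opNNNorm_def]
  exact Finset.sup_mono_fun fun i _ => Finset.sum_le_sum fun j _ => h i j

variable {n : Type*} [Fintype n] [DecidableEq n]

theorem pow_apply_le_pow_apply {R : Type*} [Semiring R] [PartialOrder R] [IsOrderedRing R]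
    {M N : Matrix n n R} (hM : ∀ i j, 0 ≤ M i j) (hMN : ∀ i j, M i j ≤ N i j) (k : ℕ)
    (i j : n) : (M ^ k) i j ≤ (N ^ k) i j := by
  induction k generalizing j with
  | zero => rfl
  | succ k ih =>
    have hN : ∀ i j, 0 ≤ N i j := fun i j => (hM i j).trans (hMN i j)
    rw [pow_succ, pow_succ, mul_apply, mul_apply]
    exact Finset.sum_le_sum fun l _ =>
      mul_le_mul (ih l) (hMN l j) (hM l j) (pow_apply_nonneg hN k i l)

theorem linfty_opNNNorm_map_ofReal_pow_le {M N : Matrix n n ℝ} (hM : ∀ i j, 0 ≤ M i j)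
    (hMN : ∀ i j, M i j ≤ N i j) (k : ℕ) :
    ‖M.map (fun x => (x : ℂ)) ^ k‖₊ ≤ ‖N.map (fun x => (x : ℂ)) ^ k‖₊ := by
  change ‖Complex.ofRealHom.mapMatrix M ^ k‖₊ ≤ ‖Complex.ofRealHom.mapMatrix N ^ k‖₊
  simp only [← map_pow]
  refine linfty_opNNNorm_mono fun i j => ?_
  have hMk := pow_apply_nonneg hM k i j
  have hMNk := pow_apply_le_pow_apply hM hMN k i j
  simp only [RingHom.mapMatrix_apply, map_apply, Complex.ofRealHom_eq_coe, Complex.nnnorm_real,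
    ← NNReal.coe_le_coe, coe_nnnorm, Real.norm_of_nonneg hMk, Real.norm_of_nonneg (hMk.trans hMNk)]
  exact hMNk

theorem spectralRadius_map_ofReal_le {M N : Matrix n n ℝ} (hM : ∀ i j, 0 ≤ M i j)
    (hMN : ∀ i j, M i j ≤ N i j) :
    spectralRadius ℂ (M.map (fun x => (x : ℂ))) ≤ spectralRadius ℂ (N.map (fun x => (x : ℂ))) :=
  spectralRadius_le_of_forall_nnnorm_pow_le (linfty_opNNNorm_map_ofReal_pow_le hM hMN)

theorem bddAbove_setOf_norm_isRoot_charpoly (A : Matrix n n ℂ) :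
    BddAbove {r : ℝ | ∃ μ : ℂ, A.charpoly.IsRoot μ ∧ r = ‖μ‖} := by
  refine ((Polynomial.finite_setOfPred_isRoot A.charpoly_monic.ne_zero).image
    (‖·‖)).bddAbove.mono ?_
  rintro _ ⟨μ, hμ, rfl⟩
  exact ⟨μ, hμ, rfl⟩

end Matrix

section specRad

variable {m : Type*} [Fintype m] [DecidableEq m]

theorem specRad_nonneg (M : Matrix m m ℝ) : 0 ≤ specRad M :=
  Real.sSup_nonneg fun _ ⟨μ, _, hr⟩ => hr ▸ norm_nonneg μ

theorem ofReal_specRad (M : Matrix m m ℝ) :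
    ENNReal.ofReal (specRad M) = spectralRadius ℂ (M.map (fun x => (x : ℂ))) := by
  have hle : spectralRadius ℂ (M.map (fun x => (x : ℂ))) ≤ ENNReal.ofReal (specRad M) := by
    refine iSup₂_le fun μ hμ => ?_
    rw [← enorm_eq_nnnorm, ← ofReal_norm]
    exact ENNReal.ofReal_le_ofReal <| le_csSup (Matrix.bddAbove_setOf_norm_isRoot_charpoly _)
      ⟨μ, Matrix.mem_spectrum_iff_isRoot_charpoly.1 hμ, rfl⟩
  have hne_top := ne_top_of_le_ne_top ENNReal.ofReal_ne_top hle
  refine le_antisymm ?_ hle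
  rw [ENNReal.ofReal_le_iff_le_toReal hne_top]
  refine Real.sSup_le (fun _ ⟨μ, hμ, hr⟩ => hr ▸ ?_) ENNReal.toReal_nonneg
  rw [← ENNReal.ofReal_le_iff_le_toReal hne_top, ofReal_norm, enorm_eq_nnnorm]
  exact le_iSup₂ (f := fun k (_ : k ∈ spectrum ℂ _) => (‖k‖₊ : ℝ≥0∞)) μ
    (Matrix.mem_spectrum_iff_isRoot_charpoly.2 hμ)

end specRad

theorem specRad_le_of_entrywise_le {n : ℕ} (M N : Matrix (Fin n) (Fin n) ℝ)
    (hM : ∀ i j, 0 ≤ M i j) (hMN : ∀ i j, M i j ≤ N i j) :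
    specRad M ≤ specRad N := by
  rw [← ENNReal.ofReal_le_ofReal_iff (specRad_nonneg N), ofReal_specRad, ofReal_specRad]
  exact Matrix.spectralRadius_map_ofReal_le hM hMN
end

section
/- Let G be a mixed graph on vertex set [n] with adjacency matrix A (a 0-1 matrix where a_{ij} = 1 iff there is an arc from i to j or an undirected edge between i and j), and let a, b be distinct vertices with a_{ab} = a_{ba} = 0. Let G_b^a be the Kelmans transformation of G from b to a, whose adjacency matrix A' satisfies: a'_{ia} = max(a_{ia}, a_{ib}), a'_{ib} = min(a_{ia}, a_{ib}), a'_{aj} = max(a_{aj}, a_{bj}), a'_{bj} = min(a_{aj}, a_{bj}) for i,j ∉ {a,b}, and a'_{ij} = a_{ij} otherwise. Then for any α ∈ [0,1], A_α(G_b^a) is obtained from A_α(G) by a matrix Kelmans transformation: specifically, A_α(G_b^a) = A_α(G)_b^a with k = α·|N⁺(b) \ N⁺(a)|, t_i = (1−α)·max(0, a_{ib} − a_{ia}), and s_i = (1−α)·max(0, a_{bi} − a_{ai}). -/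
attribute [local instance] Classical.propDecidable

/-- The `A_α` matrix `α D⁺ + (1-α) A` of a mixed graph given by its adjacency matrix `A`,
where `D⁺` is the diagonal out-degree matrix. -/
noncomputable def Aalpha {n : ℕ} (α : ℝ) (A : Matrix (Fin n) (Fin n) ℝ) :
    Matrix (Fin n) (Fin n) ℝ :=
  α • Matrix.diagonal (fun i => ∑ j, A i j) + (1 - α) • A

/-- The Kelmans transformation of a mixed graph (given by its 0-1 adjacency matrix)
from `b` to `a`. -/
noncomputable def kelmansG {n : ℕ} (A : Matrix (Fin n) (Fin n) ℝ) (a b : Fin n) :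
    Matrix (Fin n) (Fin n) ℝ :=
  Matrix.of fun i j =>
    if i ≠ a ∧ i ≠ b ∧ j = a then max (A i a) (A i b)
    else if i ≠ a ∧ i ≠ b ∧ j = b then min (A i a) (A i b)
    else if i = a ∧ j ≠ a ∧ j ≠ b then max (A a j) (A b j)
    else if i = b ∧ j ≠ a ∧ j ≠ b then min (A a j) (A b j)
    else A i j

/-- `A` is the adjacency matrix of a mixed graph: a 0-1 matrix with zero diagonal. -/
def IsMixedAdj {n : ℕ} (A : Matrix (Fin n) (Fin n) ℝ) : Prop :=
  (∀ i j, A i j = 0 ∨ A i j = 1) ∧ ∀ i, A i i = 0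

/-- The underlying simple graph of a mixed graph: forget orientations. -/
def underlying {n : ℕ} (A : Matrix (Fin n) (Fin n) ℝ) : SimpleGraph (Fin n) where
  Adj u v := u ≠ v ∧ (A u v = 1 ∨ A v u = 1)
  symm := ⟨fun u v ⟨h1, h2⟩ => ⟨h1.symm, h2.symm⟩⟩
  loopless := ⟨fun u h => h.1 rfl⟩

/-- The graph of undirected edges of a mixed graph (delete all arcs). -/
def undirPart {n : ℕ} (A : Matrix (Fin n) (Fin n) ℝ) : SimpleGraph (Fin n) where
  Adj u v := u ≠ v ∧ A u v = 1 ∧ A v u = 1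
  symm := ⟨fun u v ⟨h1, h2, h3⟩ => ⟨h1.symm, h3, h2⟩⟩
  loopless := ⟨fun u h => h.1 rfl⟩

/-- The Kelmans transformation of a matrix `C` from `b` to `a` with respect to `(tᵢ; sᵢ; k)`. -/
noncomputable def kelmansMat {n : ℕ} (C : Matrix (Fin n) (Fin n) ℝ) (a b : Fin n)
    (t s : Fin n → ℝ) (k : ℝ) : Matrix (Fin n) (Fin n) ℝ :=
  Matrix.of fun i j =>
    if i = a ∧ j = a then C a a + k
    else if i = b ∧ j = b then C b b - k
    else if i ≠ a ∧ i ≠ b ∧ j = a then C i a + t i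
    else if i ≠ a ∧ i ≠ b ∧ j = b then C i b - t i
    else if i = a ∧ j ≠ a ∧ j ≠ b then C a j + s j
    else if i = b ∧ j ≠ a ∧ j ≠ b then C b j - s j
    else C i j

/-! Since `max x y = x + (y - x)⁺` and `min x y = y - (y - x)⁺`, the graph transformation
`G_b^a` is itself the matrix transformation of `A` with `tᵢ = (a_{ib} - a_{ia})⁺`,
`sⱼ = (a_{bj} - a_{aj})⁺` and `k = 0`. A matrix transformation keeps the row sums outside `{a, b}`
and moves `k + ∑_{j ∉ {a, b}} sⱼ` from the row sum of `b` to that of `a`, so `A_α` of it is again a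
matrix transformation. For a 0-1 matrix with `a_{bb} = a_{ba} = 0` that sum of the `sⱼ` counts
`N⁺(b) \ N⁺(a)`. -/

section MaxZeroSub

variable {G : Type*} [AddCommGroup G] [LinearOrder G] [IsOrderedAddMonoid G]

theorem add_max_zero_sub (x y : G) : x + max 0 (y - x) = max x y := by
  rw [← sub_self x, max_sub_sub_right]; abel

theorem sub_max_zero_sub (x y : G) : y - max 0 (y - x) = min x y := by
  have h := min_add_max x y
  rw [← add_max_zero_sub x y] at h
  rw [eq_sub_of_add_eq h]; abel

end MaxZeroSub

section Kelmans

variable {n : ℕ} {a b : Fin n}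

theorem kelmansMat_add (C C' : Matrix (Fin n) (Fin n) ℝ) (t t' s s' : Fin n → ℝ) (k k' : ℝ) :
    kelmansMat C a b t s k + kelmansMat C' a b t' s' k' =
      kelmansMat (C + C') a b (t + t') (s + s') (k + k') := by
  ext i j
  simp only [kelmansMat, Matrix.add_apply, Matrix.of_apply, Pi.add_apply]
  split_ifs <;> ring

theorem smul_kelmansMat (c : ℝ) (C : Matrix (Fin n) (Fin n) ℝ) (t s : Fin n → ℝ) (k : ℝ) :
    c • kelmansMat C a b t s k = kelmansMat (c • C) a b (c • t) (c • s) (c * k) := by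
  ext i j
  simp only [kelmansMat, Matrix.smul_apply, Matrix.of_apply, Pi.smul_apply, smul_eq_mul]
  split_ifs <;> ring

theorem diagonal_add_single_sub_single_eq_kelmansMat (hab : a ≠ b) (d : Fin n → ℝ) (x : ℝ) :
    Matrix.diagonal (d + Pi.single a x - Pi.single b x) =
      kelmansMat (Matrix.diagonal d) a b 0 0 x := by
  ext i j
  by_cases hij : i = j
  · subst hij
    by_cases hia : i = a
    · subst i; simp [kelmansMat, hab]
    · by_cases hib : i = b
      · subst i; simp [kelmansMat, hia]
      · simp [kelmansMat, hia, hib]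
  · simp only [kelmansMat, Matrix.diagonal_apply_ne _ hij, Matrix.of_apply, Pi.zero_apply,
      add_zero, sub_zero]
    split_ifs <;> simp_all

theorem sum_kelmansMat_apply (hab : a ≠ b) (C : Matrix (Fin n) (Fin n) ℝ) (t s : Fin n → ℝ)
    (k : ℝ) :
    (fun i => ∑ j, kelmansMat C a b t s k i j) =
      (fun i => ∑ j, C i j) + Pi.single a (k + ∑ j ∈ {a, b}ᶜ, s j)
        - Pi.single b (k + ∑ j ∈ {a, b}ᶜ, s j) := by
  ext i
  have hcompl : ∀ j ∈ ({a, b}ᶜ : Finset (Fin n)), j ≠ a ∧ j ≠ b := by simp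
  simp only [Pi.add_apply, Pi.sub_apply]
  rw [← Finset.sum_add_sum_compl {a, b}, ← Finset.sum_add_sum_compl {a, b} (C i),
    Finset.sum_pair hab, Finset.sum_pair hab]
  by_cases hia : i = a
  · subst i
    have hrow : ∀ j ∈ ({a, b}ᶜ : Finset (Fin n)), kelmansMat C a b t s k a j = C a j + s j :=
      fun j hj => by simp [kelmansMat, hcompl j hj]
    have haa : kelmansMat C a b t s k a a = C a a + k := by simp [kelmansMat]
    have hab' : kelmansMat C a b t s k a b = C a b := by simp [kelmansMat, hab, hab.symm]
    rw [Finset.sum_congr rfl hrow, Finset.sum_add_distrib, haa, hab', Pi.single_eq_same,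
      Pi.single_eq_of_ne hab]
    ring
  by_cases hib : i = b
  · subst i
    have hrow : ∀ j ∈ ({a, b}ᶜ : Finset (Fin n)), kelmansMat C a b t s k b j = C b j - s j :=
      fun j hj => by simp [kelmansMat, hab.symm, hcompl j hj]
    have hba : kelmansMat C a b t s k b a = C b a := by simp [kelmansMat, hab, hab.symm]
    have hbb : kelmansMat C a b t s k b b = C b b - k := by simp [kelmansMat, hab.symm]
    rw [Finset.sum_congr rfl hrow, Finset.sum_sub_distrib, hba, hbb, Pi.single_eq_same,
      Pi.single_eq_of_ne hab.symm]
    ring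
  have hrow : ∀ j ∈ ({a, b}ᶜ : Finset (Fin n)), kelmansMat C a b t s k i j = C i j :=
    fun j hj => by simp [kelmansMat, hia, hib, hcompl j hj]
  rw [Finset.sum_congr rfl hrow, Pi.single_eq_of_ne hia, Pi.single_eq_of_ne hib]
  simp [kelmansMat, hab.symm, hia, hib]

theorem Aalpha_kelmansMat (hab : a ≠ b) (α : ℝ) (C : Matrix (Fin n) (Fin n) ℝ)
    (t s : Fin n → ℝ) (k : ℝ) :
    Aalpha α (kelmansMat C a b t s k) =
      kelmansMat (Aalpha α C) a b ((1 - α) • t) ((1 - α) • s)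
        (α * (k + ∑ j ∈ {a, b}ᶜ, s j) + (1 - α) * k) := by
  rw [Aalpha, sum_kelmansMat_apply hab, diagonal_add_single_sub_single_eq_kelmansMat hab,
    smul_kelmansMat, smul_kelmansMat, kelmansMat_add, Aalpha]
  simp

end Kelmans

theorem kelmansG_eq_kelmansMat {n : ℕ} (A : Matrix (Fin n) (Fin n) ℝ) (a b : Fin n) :
    kelmansG A a b =
      kelmansMat A a b (fun i => max 0 (A i b - A i a)) (fun j => max 0 (A b j - A a j)) 0 := by
  ext i j
  simp only [kelmansG, kelmansMat, Matrix.of_apply, add_max_zero_sub, sub_max_zero_sub]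
  split_ifs <;> simp_all

theorem max_zero_sub_eq_ite {x y : ℝ} (hx : x = 0 ∨ x = 1) (hy : y = 0 ∨ y = 1) :
    max 0 (y - x) = if y = 1 ∧ ¬ x = 1 then 1 else 0 := by
  rcases hx with rfl | rfl <;> rcases hy with rfl | rfl <;> norm_num

theorem IsMixedAdj.sum_compl_max_zero_sub_eq_card {n : ℕ} {A : Matrix (Fin n) (Fin n) ℝ}
    (hA : IsMixedAdj A) {a b : Fin n} (hba : A b a = 0) :
    ∑ j ∈ {a, b}ᶜ, max 0 (A b j - A a j) =
      ((Finset.univ.filter fun j => A b j = 1 ∧ ¬ A a j = 1).card : ℝ) := by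
  have hvanish : ∀ j ∈ Finset.univ, j ∉ ({a, b}ᶜ : Finset (Fin n)) →
      max 0 (A b j - A a j) = 0 := by
    intro j _ hj
    rcases Finset.mem_insert.mp (Finset.notMem_compl.mp hj) with rfl | hj
    · simp [hba, hA.2]
    · rw [Finset.mem_singleton.mp hj, hA.2]
      rcases hA.1 a b with h | h <;> simp [h]
  rw [Finset.sum_subset (Finset.subset_univ _) hvanish, ← Finset.sum_boole]
  exact Finset.sum_congr rfl fun j _ => max_zero_sub_eq_ite (hA.1 a j) (hA.1 b j)

theorem Aalpha_kelmansG_eq_kelmansMat_general {n : ℕ} (α : ℝ)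
    (A : Matrix (Fin n) (Fin n) ℝ) (hA : IsMixedAdj A)
    (a b : Fin n) (hab : a ≠ b) (hba' : A b a = 0) :
    Aalpha α (kelmansG A a b) =
      kelmansMat (Aalpha α A) a b
        (fun i => (1 - α) * max 0 (A i b - A i a))
        (fun i => (1 - α) * max 0 (A b i - A a i))
        (α * ((Finset.univ.filter fun j => A b j = 1 ∧ ¬ A a j = 1).card : ℝ)) := by
  rw [kelmansG_eq_kelmansMat, Aalpha_kelmansMat hab, hA.sum_compl_max_zero_sub_eq_card hba']
  congr 1
  ring

/-- The `A_α` matrix of the graph Kelmans transformation `G_b^a` is the matrix Kelmans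
transformation of `A_α(G)` with `k = α|N⁺(b)∖N⁺(a)|`, `tᵢ = (1-α)max(0, a_{ib}-a_{ia})`,
`sᵢ = (1-α)max(0, a_{bi}-a_{ai})`. -/
theorem Aalpha_kelmansG_eq_kelmansMat {n : ℕ} (α : ℝ) (hα : α ∈ Set.Icc (0:ℝ) 1)
    (A : Matrix (Fin n) (Fin n) ℝ) (hA : IsMixedAdj A)
    (a b : Fin n) (hab : a ≠ b) (hba : A a b = 0) (hba' : A b a = 0) :
    Aalpha α (kelmansG A a b) =
      kelmansMat (Aalpha α A) a b
        (fun i => (1 - α) * max 0 (A i b - A i a))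
        (fun i => (1 - α) * max 0 (A b i - A a i))
        (α * ((Finset.univ.filter fun j => A b j = 1 ∧ ¬ A a j = 1).card : ℝ)) :=
  Aalpha_kelmansG_eq_kelmansMat_general α A hA a b hab hba'
end

section
/- Let G be a mixed graph with distinct vertices a, b having no arc between them, and let G_b^a be the Kelmans transformation from b to a. Then in dictionary (lexicographic) order on descending degree sequences, the degree sequence of G_b^a is at least that of G. -/
attribute [local instance] Classical.propDecidable

/-- The degree of a vertex of a mixed graph: `|N⁺(u)| + |N⁻(u)|`. -/
noncomputable def mixedDeg {n : ℕ} (A : Matrix (Fin n) (Fin n) ℝ) (u : Fin n) : ℕ :=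
  (Finset.univ.filter fun v => A u v = 1).card + (Finset.univ.filter fun v => A v u = 1).card

/-- The degree sequence of a mixed graph, listed in descending order. -/
noncomputable def degSeq {n : ℕ} (A : Matrix (Fin n) (Fin n) ℝ) : List ℕ :=
  (Multiset.sort (Finset.univ.val.map fun u => mixedDeg A u) (· ≤ ·)).reverse

/-! The transformation leaves every degree outside `{a, b}` unchanged, preserves
`d(a) + d(b)`, and gives `a` a new degree at least `max (d a) (d b)` (for `d b`, compare the
arcs at `b` with the new arcs at `a` after exchanging `a` and `b`). Any `k` old degrees are
therefore dominated in sum by some `k` new degrees, so each prefix sum of the new descending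
degree sequence dominates the old one; for sequences of equal length this forces equality or a
lexicographic increase. -/

namespace List

variable {α : Type*} [AddCommMonoid α] [LinearOrder α]

theorem sum_take_le_sum_take_cons [CanonicallyOrderedAdd α] [IsOrderedAddMonoid α] {s : List α}
    {a : α} (h : ∀ x ∈ s, x ≤ a) (k : ℕ) : (s.take k).sum ≤ ((a :: s).take k).sum := by
  cases k with
  | zero => simp
  | succ k =>
    rw [take_add_one, take_succ_cons, sum_append, sum_cons, add_comm a]
    gcongr
    cases hk : s[k]? with
    | none => simp
    | some x => simpa using h x (mem_of_getElem? hk)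

theorem Sublist.sum_le_sum_take [CanonicallyOrderedAdd α] [IsOrderedAddMonoid α] {l s : List α}
    (hl : l <+ s) (hs : s.Pairwise (· ≥ ·)) {k : ℕ} (hk : l.length ≤ k) :
    l.sum ≤ (s.take k).sum := by
  induction hl generalizing k with
  | slnil => simp
  | cons a _ ih =>
    exact (ih hs.of_cons hk).trans (sum_take_le_sum_take_cons (pairwise_cons.1 hs).1 k)
  | cons_cons a _ ih =>
    obtain _ | k := k
    · simp at hk
    rw [sum_cons, take_succ_cons, sum_cons]
    gcongr
    exact ih hs.of_cons (by simpa using hk)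

theorem eq_or_lex_of_sum_take_le [IsOrderedCancelAddMonoid α] {s t : List α}
    (hl : s.length = t.length) (h : ∀ k, (s.take k).sum ≤ (t.take k).sum) :
    t = s ∨ Lex (· < ·) s t := by
  induction s generalizing t with
  | nil => exact Or.inl (length_eq_zero_iff.1 hl.symm)
  | cons a s ih =>
    obtain _ | ⟨b, t⟩ := t
    · simp at hl
    obtain hab | rfl := (by simpa using h 1 : a ≤ b).lt_or_eq
    · exact Or.inr (Lex.rel hab)
    obtain rfl | hlex := ih (by simpa using hl) fun k => by simpa using h (k + 1)
    · exact Or.inl rfl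
    · exact Or.inr (Lex.cons hlex)

end List

theorem Multiset.sum_le_sum_take {α : Type*} [AddCommMonoid α] [LinearOrder α]
    [CanonicallyOrderedAdd α] [IsOrderedAddMonoid α] {T : Multiset α} {s : List α}
    (hs : s.Pairwise (· ≥ ·)) (hT : T ≤ s) {k : ℕ} (hk : card T ≤ k) :
    T.sum ≤ (s.take k).sum := by
  induction T using Quotient.inductionOn with
  | h l =>
    obtain ⟨l', hperm, hsub⟩ := coe_le.1 hT
    rw [quot_mk_to_coe, sum_coe, ← hperm.sum_eq]
    exact hsub.sum_le_sum_take hs (hperm.length_eq ▸ hk)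

theorem Multiset.exists_le_map_eq_of_le_map {α β : Type*} {f : α → β} {T : Multiset β}
    {M : Multiset α} (h : T ≤ M.map f) : ∃ U ≤ M, U.map f = T := by
  induction T, M using Quotient.inductionOn₂ with
  | h l m =>
    obtain ⟨l', hperm, hsub⟩ := coe_le.1 h
    obtain ⟨u, hu, rfl⟩ := List.sublist_map_iff.1 hsub
    exact ⟨u, coe_le.2 hu.subperm, coe_eq_coe.2 hperm⟩

theorem Finset.exists_card_le_sum_le_of_transfer {ι α : Type*} [DecidableEq ι] [AddCommMonoid α]
    [PartialOrder α] [IsOrderedAddMonoid α] {f g : ι → α} {a b : ι} (hab : a ≠ b)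
    (hfg : ∀ i, i ≠ a → i ≠ b → g i = f i) (hsum : g a + g b = f a + f b)
    (ha : f a ≤ g a) (hb : f b ≤ g a) (I : Finset ι) :
    ∃ J : Finset ι, J.card ≤ I.card ∧ ∑ i ∈ I, f i ≤ ∑ i ∈ J, g i := by
  by_cases hbI : b ∈ I
  · by_cases haI : a ∈ I
    · refine ⟨I, le_rfl, le_of_eq ?_⟩
      have hpair : {a, b} ⊆ I := Finset.insert_subset haI (Finset.singleton_subset_iff.2 hbI)
      rw [← Finset.sum_sdiff hpair, ← Finset.sum_sdiff hpair, Finset.sum_pair hab,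
        Finset.sum_pair hab, hsum]
      congr 1
      refine Finset.sum_congr rfl fun i hi => ?_
      simp only [Finset.mem_sdiff, Finset.mem_insert, Finset.mem_singleton, not_or] at hi
      exact (hfg i hi.2.1 hi.2.2).symm
    · have haI' : a ∉ I.erase b := fun h => haI (Finset.mem_of_mem_erase h)
      refine ⟨insert a (I.erase b), ?_, ?_⟩
      · rw [Finset.card_insert_of_notMem haI', Finset.card_erase_add_one hbI]
      calc ∑ i ∈ I, f i = f b + ∑ i ∈ I.erase b, f i := (Finset.add_sum_erase I f hbI).symm
        _ ≤ g a + ∑ i ∈ I.erase b, g i := by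
            gcongr with i hi
            obtain ⟨hib, hiI⟩ := Finset.mem_erase.1 hi
            exact (hfg i (ne_of_mem_of_not_mem hiI haI) hib).ge
        _ = ∑ i ∈ insert a (I.erase b), g i := (Finset.sum_insert haI').symm
  · refine ⟨I, le_rfl, Finset.sum_le_sum fun i hi => ?_⟩
    by_cases hia : i = a
    · exact hia ▸ ha
    · exact (hfg i hia (ne_of_mem_of_not_mem hi hbI)).ge

section SortDesc

variable {ι α : Type*} [Fintype ι] [LinearOrder α]

noncomputable def sortDesc (f : ι → α) : List α :=
  (Multiset.sort (Finset.univ.val.map f) (· ≤ ·)).reverse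

theorem coe_sortDesc (f : ι → α) : (sortDesc f : Multiset α) = Finset.univ.val.map f := by
  rw [sortDesc, Multiset.coe_reverse, Multiset.sort_eq]

theorem pairwise_sortDesc (f : ι → α) : (sortDesc f).Pairwise (· ≥ ·) :=
  List.pairwise_reverse.2 (Multiset.pairwise_sort _ _)

theorem length_sortDesc (f : ι → α) : (sortDesc f).length = Fintype.card ι := by
  simp [sortDesc]

variable [AddCommMonoid α]

theorem exists_sum_eq_sum_take_sortDesc (f : ι → α) (k : ℕ) :
    ∃ I : Finset ι, I.card ≤ k ∧ ∑ i ∈ I, f i = ((sortDesc f).take k).sum := by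
  have hle : ((sortDesc f).take k : Multiset α) ≤ Finset.univ.val.map f :=
    coe_sortDesc f ▸ Multiset.coe_le.2 (List.take_sublist k _).subperm
  obtain ⟨U, hU, hUf⟩ := Multiset.exists_le_map_eq_of_le_map hle
  refine ⟨⟨U, Multiset.nodup_of_le hU Finset.univ.nodup⟩, ?_, ?_⟩
  · change Multiset.card U ≤ k
    rw [← Multiset.card_map f, hUf, Multiset.coe_card]
    exact List.length_take_le _ _
  · rw [Finset.sum_eq_multiset_sum]
    simp [hUf]

variable [CanonicallyOrderedAdd α] [IsOrderedAddMonoid α]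

theorem sum_le_sum_take_sortDesc (f : ι → α) {I : Finset ι} {k : ℕ} (hI : I.card ≤ k) :
    ∑ i ∈ I, f i ≤ ((sortDesc f).take k).sum :=
  Multiset.sum_le_sum_take (pairwise_sortDesc f)
    (coe_sortDesc f ▸ Multiset.map_le_map (Finset.val_le_iff.2 I.subset_univ)) (by simpa using hI)

theorem sum_take_sortDesc_le_of_transfer [DecidableEq ι] {f g : ι → α} {a b : ι}
    (hab : a ≠ b) (hfg : ∀ i, i ≠ a → i ≠ b → g i = f i) (hsum : g a + g b = f a + f b)
    (ha : f a ≤ g a) (hb : f b ≤ g a) (k : ℕ) :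
    ((sortDesc f).take k).sum ≤ ((sortDesc g).take k).sum := by
  obtain ⟨I, hIk, hI⟩ := exists_sum_eq_sum_take_sortDesc f k
  obtain ⟨J, hJI, hIJ⟩ := Finset.exists_card_le_sum_le_of_transfer hab hfg hsum ha hb I
  exact hI ▸ hIJ.trans (sum_le_sum_take_sortDesc g (hJI.trans hIk))

end SortDesc

theorem sortDesc_eq_or_lex_of_transfer {ι α : Type*} [Fintype ι] [DecidableEq ι]
    [AddCommMonoid α] [LinearOrder α] [CanonicallyOrderedAdd α] [IsOrderedCancelAddMonoid α]
    {f g : ι → α} {a b : ι} (hab : a ≠ b) (hfg : ∀ i, i ≠ a → i ≠ b → g i = f i)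
    (hsum : g a + g b = f a + f b) (ha : f a ≤ g a) (hb : f b ≤ g a) :
    sortDesc g = sortDesc f ∨ List.Lex (· < ·) (sortDesc f) (sortDesc g) :=
  List.eq_or_lex_of_sum_take_le (by simp only [length_sortDesc])
    (sum_take_sortDesc_le_of_transfer hab hfg hsum ha hb)

section Kelmans

open scoped Matrix

variable {n : ℕ} (M : Matrix (Fin n) (Fin n) ℝ) {a b : Fin n}

theorem kelmansG_transpose : (kelmansG M a b)ᵀ = kelmansG Mᵀ a b := by
  ext i j
  simp only [kelmansG, Matrix.transpose_apply, Matrix.of_apply]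
  split_ifs <;> simp_all

theorem kelmansG_zero_or_one (hM : ∀ i j, M i j = 0 ∨ M i j = 1) (i j : Fin n) :
    kelmansG M a b i j = 0 ∨ kelmansG M a b i j = 1 := by
  simp only [kelmansG, Matrix.of_apply, max_def, min_def]
  split_ifs <;> apply hM

theorem sum_kelmansG_row_of_ne (hab : a ≠ b) {i : Fin n} (hia : i ≠ a) (hib : i ≠ b) :
    ∑ j, kelmansG M a b i j = ∑ j, M i j := by
  have hdiff : ∑ j, (kelmansG M a b i j - M i j) = 0 := by
    rw [Fintype.sum_eq_add a b hab fun j ⟨hja, hjb⟩ => by simp [kelmansG, hia, hib, hja, hjb]]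
    simp only [kelmansG, ne_eq, Matrix.of_apply, hia, hib, hab.symm, not_false_eq_true, and_self,
      and_false, ↓reduceIte]
    linarith [min_add_max (M i a) (M i b)]
  rwa [Finset.sum_sub_distrib, sub_eq_zero] at hdiff

theorem kelmansG_row_add (hab : a ≠ b) (j : Fin n) :
    kelmansG M a b a j + kelmansG M a b b j = M a j + M b j := by
  rcases eq_or_ne j a with rfl | hja
  · simp [kelmansG, hab.symm]
  rcases eq_or_ne j b with rfl | hjb
  · simp [kelmansG, hab]
  simp [kelmansG, hab.symm, hja, hjb, max_add_min]

theorem le_kelmansG_row (j : Fin n) : M a j ≤ kelmansG M a b a j := by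
  simp only [kelmansG, Matrix.of_apply]
  split_ifs <;> simp_all

theorem le_kelmansG_add_kelmansG_transpose_swap (hdiag : M b b ≤ M a a) (j : Fin n) :
    M b (Equiv.swap a b j) + Mᵀ b (Equiv.swap a b j) ≤
      kelmansG M a b a j + kelmansG Mᵀ a b a j := by
  rcases eq_or_ne j a with rfl | hja
  · simpa [kelmansG] using add_le_add hdiag hdiag
  rcases eq_or_ne j b with rfl | hjb
  · simp [kelmansG, hja, add_comm]
  rw [Equiv.swap_apply_of_ne_of_ne hja hjb]
  simpa [kelmansG, hja, hjb] using add_le_add (le_max_right (M a j) _) (le_max_right (M j a) _)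

end Kelmans

theorem cast_card_filter_eq_one {ι : Type*} [Fintype ι] {x : ι → ℝ}
    (hx : ∀ i, x i = 0 ∨ x i = 1) :
    ((Finset.univ.filter fun i => x i = 1).card : ℝ) = ∑ i, x i := by
  rw [Finset.card_filter, Nat.cast_sum]
  refine Finset.sum_congr rfl fun i _ => ?_
  rcases hx i with h | h <;> simp [h]

-- The two sides differ only in the decidability instance used for sorting.
theorem degSeq_eq_sortDesc {n : ℕ} (A : Matrix (Fin n) (Fin n) ℝ) :
    degSeq A = sortDesc (mixedDeg A) := by
  unfold degSeq sortDesc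
  congr

section MixedDeg

open scoped Matrix

variable {n : ℕ} {A : Matrix (Fin n) (Fin n) ℝ} {a b : Fin n}

theorem cast_mixedDeg (hA : ∀ i j, A i j = 0 ∨ A i j = 1) (u : Fin n) :
    (mixedDeg A u : ℝ) = ∑ v, A u v + ∑ v, Aᵀ u v := by
  rw [mixedDeg, Nat.cast_add, cast_card_filter_eq_one (hA u),
    cast_card_filter_eq_one fun v => hA v u]
  rfl

theorem cast_mixedDeg_kelmansG (hA : ∀ i j, A i j = 0 ∨ A i j = 1) (u : Fin n) :
    (mixedDeg (kelmansG A a b) u : ℝ) =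
      ∑ v, kelmansG A a b u v + ∑ v, kelmansG Aᵀ a b u v := by
  rw [cast_mixedDeg (kelmansG_zero_or_one A hA), kelmansG_transpose]

theorem mixedDeg_kelmansG_of_ne (hA : ∀ i j, A i j = 0 ∨ A i j = 1) (hab : a ≠ b) {i : Fin n}
    (hia : i ≠ a) (hib : i ≠ b) : mixedDeg (kelmansG A a b) i = mixedDeg A i := by
  have h : (mixedDeg (kelmansG A a b) i : ℝ) = mixedDeg A i := by
    rw [cast_mixedDeg_kelmansG hA, cast_mixedDeg hA, sum_kelmansG_row_of_ne A hab hia hib,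
      sum_kelmansG_row_of_ne Aᵀ hab hia hib]
  exact_mod_cast h

theorem mixedDeg_kelmansG_add (hA : ∀ i j, A i j = 0 ∨ A i j = 1) (hab : a ≠ b) :
    mixedDeg (kelmansG A a b) a + mixedDeg (kelmansG A a b) b = mixedDeg A a + mixedDeg A b := by
  have hrow (M : Matrix (Fin n) (Fin n) ℝ) :
      ∑ v, kelmansG M a b a v + ∑ v, kelmansG M a b b v = ∑ v, M a v + ∑ v, M b v := by
    simp only [← Finset.sum_add_distrib, kelmansG_row_add M hab]
  have h : (mixedDeg (kelmansG A a b) a + mixedDeg (kelmansG A a b) b : ℝ) =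
      mixedDeg A a + mixedDeg A b := by
    rw [cast_mixedDeg_kelmansG hA, cast_mixedDeg_kelmansG hA, cast_mixedDeg hA, cast_mixedDeg hA]
    linarith [hrow A, hrow Aᵀ]
  exact_mod_cast h

theorem mixedDeg_le_mixedDeg_kelmansG_left (hA : ∀ i j, A i j = 0 ∨ A i j = 1) :
    mixedDeg A a ≤ mixedDeg (kelmansG A a b) a := by
  have h : (mixedDeg A a : ℝ) ≤ mixedDeg (kelmansG A a b) a := by
    rw [cast_mixedDeg_kelmansG hA, cast_mixedDeg hA]
    gcongr with v _ v _
    · exact le_kelmansG_row A v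
    · exact le_kelmansG_row Aᵀ v
  exact_mod_cast h

theorem mixedDeg_right_le_mixedDeg_kelmansG_left (hA : IsMixedAdj A) :
    mixedDeg A b ≤ mixedDeg (kelmansG A a b) a := by
  have hdiag : A b b ≤ A a a := ((hA.2 b).trans (hA.2 a).symm).le
  have h : (mixedDeg A b : ℝ) ≤ mixedDeg (kelmansG A a b) a := by
    rw [cast_mixedDeg_kelmansG hA.1, cast_mixedDeg hA.1, ← Finset.sum_add_distrib,
      ← Finset.sum_add_distrib, ← Equiv.sum_comp (Equiv.swap a b)]
    exact Finset.sum_le_sum fun v _ => le_kelmansG_add_kelmansG_transpose_swap A hdiag v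
  exact_mod_cast h

end MixedDeg

theorem degSeq_le_degSeq_kelmansG_general {n : ℕ} (A : Matrix (Fin n) (Fin n) ℝ) (hA : IsMixedAdj A)
    (a b : Fin n) (hab : a ≠ b) :
    degSeq (kelmansG A a b) = degSeq A ∨
      List.Lex (· < ·) (degSeq A) (degSeq (kelmansG A a b)) := by
  rw [degSeq_eq_sortDesc, degSeq_eq_sortDesc]
  exact sortDesc_eq_or_lex_of_transfer hab
    (fun _ hia hib => mixedDeg_kelmansG_of_ne hA.1 hab hia hib) (mixedDeg_kelmansG_add hA.1 hab)
    (mixedDeg_le_mixedDeg_kelmansG_left hA.1) (mixedDeg_right_le_mixedDeg_kelmansG_left hA)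

/-- In dictionary order on descending degree sequences, `d(G_b^a) ≥ d(G)`. -/
theorem degSeq_le_degSeq_kelmansG {n : ℕ} (A : Matrix (Fin n) (Fin n) ℝ) (hA : IsMixedAdj A)
    (a b : Fin n) (hab : a ≠ b) (hnoarc : A a b = A b a) :
    degSeq (kelmansG A a b) = degSeq A ∨
      List.Lex (· < ·) (degSeq A) (degSeq (kelmansG A a b)) :=
  degSeq_le_degSeq_kelmansG_general A hA a b hab
end

section
/- Let T be a mixed tree of order n and size m with A_α matrix A_α(T) = αD⁺ + (1−α)A for α ∈ [0,1], and let C₁, ..., C_t (t = 2n−m−1) be the vertex sets of the components of T obtained by deleting all arcs. Then the characteristic polynomial of A_α(T) factors as the product over i of the characteristic polynomials of the principal submatrices A_α(T)[C_i]. -/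
attribute [local instance] Classical.propDecidable

/-!
Orient the tree by giving each edge `u v` the weight `A u v - A v u`, and let `f v` be the total
weight of the path from a fixed root to `v`. Undirected edges have weight `0` and an arc `u → v`
has weight `1`, so `f` is constant on every component of the graph of undirected edges and
strictly increases along arcs. Ordering the components by `f` (ties broken arbitrarily) makes
`A_α(T)` block upper triangular, and the characteristic polynomial of a block triangular matrix
is the product of those of its diagonal blocks.
-/

open Finset

namespace Matrix

variable {ι β γ R : Type*} [Fintype ι] [DecidableEq ι] [DecidableEq β] [CommRing R]

theorem charpoly_eq_prod_fibers_of_blockTriangular [LinearOrder γ] (M : Matrix ι ι R)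
    (π : ι → β) {g : β → γ} (hg : Function.Injective g) (hM : M.BlockTriangular (g ∘ π)) :
    M.charpoly = ∏ c ∈ univ.image π,
      (M.submatrix (Subtype.val : {i // π i = c} → ι) Subtype.val).charpoly := by
  let _ : DecidableEq γ := LinearOrder.toDecidableEq
  rw [hM.charpoly, ← image_image, prod_image hg.injOn]
  refine prod_congr rfl fun c _ => ?_
  rw [← charpoly_reindex (Equiv.subtypeEquivRight fun i => hg.eq_iff)]
  rfl

theorem charpoly_eq_prod_fibers [LinearOrder γ] (M : Matrix ι ι R) (π : ι → β) (F : β → γ)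
    (hM : ∀ i j, M i j ≠ 0 → π i = π j ∨ F (π i) < F (π j)) :
    M.charpoly = ∏ c ∈ univ.image π,
      (M.submatrix (Subtype.val : {i // π i = c} → ι) Subtype.val).charpoly := by
  let _ : LinearOrder β := IsWellOrder.linearOrder WellOrderingRel
  refine M.charpoly_eq_prod_fibers_of_blockTriangular π (g := fun c => toLex (F c, c))
    (fun c d h => congrArg Prod.snd (congrArg ofLex h)) fun i j hji => ?_
  by_contra hij
  rcases hM i j hij with h | h
  · simp [h] at hji
  · exact (Prod.Lex.lt_iff.mp hji).elim (fun h' => h.asymm h') fun h' => h.ne h'.1.symm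

end Matrix

namespace SimpleGraph

variable {V β : Type*} {G : SimpleGraph V}

theorem Walk.apply_eq_of_forall_adj {f : V → β} (hf : ∀ u v, G.Adj u v → f u = f v) {u v : V}
    (p : G.Walk u v) : f u = f v := by
  induction p with
  | nil => rfl
  | cons h _ ih => exact (hf _ _ h).trans ih

variable [AddCommGroup β]

noncomputable def IsTree.potential (hG : G.IsTree) (w : V → V → β) (r v : V) : β :=
  ((hG.existsUnique_path r v).exists.choose.darts.map fun d => w d.fst d.snd).sum

theorem IsTree.potential_eq_of_isPath (hG : G.IsTree) (w : V → V → β) {r v : V}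
    {p : G.Walk r v} (hp : p.IsPath) :
    hG.potential w r v = (p.darts.map fun d => w d.fst d.snd).sum := by
  rw [potential, (hG.existsUnique_path r v).unique (hG.existsUnique_path r v).exists.choose_spec hp]

theorem IsTree.potential_adj (hG : G.IsTree) {w : V → V → β} (hw : ∀ u v, w v u = -w u v)
    (r : V) {u v : V} (h : G.Adj u v) : hG.potential w r v = hG.potential w r u + w u v := by
  obtain ⟨p, hp, -⟩ := hG.existsUnique_path r u
  obtain ⟨q, hq, -⟩ := hG.existsUnique_path r v
  rw [hG.potential_eq_of_isPath w hp, hG.potential_eq_of_isPath w hq]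
  by_cases hu : u ∈ q.support
  · simp [hG.isAcyclic.path_concat hp hq h hu, Walk.darts_concat]
  · have hv := hG.isAcyclic.mem_support_of_ne_mem_support_of_adj_of_isPath hp hq h hu
    simp [hG.isAcyclic.path_concat hq hp h.symm hv, Walk.darts_concat, hw u v]

end SimpleGraph

section MixedTree

variable {n : ℕ} {A : Matrix (Fin n) (Fin n) ℝ}

theorem Aalpha_apply_of_ne (α : ℝ) {i j : Fin n} (h : i ≠ j) :
    Aalpha α A i j = (1 - α) * A i j := by
  simp [Aalpha, Matrix.diagonal_apply_ne _ h]

noncomputable def arcPotential (htree : (underlying A).IsTree) (r : Fin n) : Fin n → ℝ :=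
  htree.potential (fun u v => A u v - A v u) r

variable (htree : (underlying A).IsTree) (r : Fin n) {u v : Fin n}

theorem arcPotential_adj (h : (underlying A).Adj u v) :
    arcPotential htree r v = arcPotential htree r u + (A u v - A v u) :=
  htree.potential_adj (fun _ _ => by ring) r h

theorem arcPotential_eq_of_undirPart_adj (h : (undirPart A).Adj u v) :
    arcPotential htree r u = arcPotential htree r v := by
  obtain ⟨hne, huv, hvu⟩ := h
  rw [arcPotential_adj htree r ⟨hne, Or.inl huv⟩, huv, hvu, sub_self, add_zero]

theorem arcPotential_lt_of_arc (huv : A u v = 1) (hvu : A v u = 0) :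
    arcPotential htree r u < arcPotential htree r v := by
  have hne : u ≠ v := by rintro rfl; simp [huv] at hvu
  rw [arcPotential_adj htree r ⟨hne, Or.inl huv⟩, huv, hvu]
  linarith

end MixedTree

theorem charpoly_Aalpha_eq_prod_components_general {n : ℕ} (α : ℝ)
    (A : Matrix (Fin n) (Fin n) ℝ) (hA : IsMixedAdj A) (htree : (underlying A).IsTree) :
    (Aalpha α A).charpoly =
      ∏ c ∈ Finset.univ.image (undirPart A).connectedComponentMk,
        ((Aalpha α A).submatrix
          (fun i : {v // (undirPart A).connectedComponentMk v = c} => (i : Fin n))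
          (fun j : {v // (undirPart A).connectedComponentMk v = c} => (j : Fin n))).charpoly := by
  obtain ⟨r⟩ := htree.connected.nonempty
  let F := SimpleGraph.ConnectedComponent.lift (arcPotential htree r) fun _ _ p _ =>
    p.apply_eq_of_forall_adj fun _ _ => arcPotential_eq_of_undirPart_adj htree r
  refine (Aalpha α A).charpoly_eq_prod_fibers _ F fun i j hij => ?_
  rcases eq_or_ne i j with rfl | hne
  · exact Or.inl rfl
  have hAij : A i j = 1 :=
    (hA.1 i j).resolve_left fun h0 => hij (by simp [Aalpha_apply_of_ne α hne, h0])
  rcases hA.1 j i with hAji | hAji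
  · exact Or.inr (arcPotential_lt_of_arc htree r hAij hAji)
  · exact Or.inl <|
      SimpleGraph.ConnectedComponent.connectedComponentMk_eq_of_adj ⟨hne, hAij, hAji⟩

/-- The characteristic polynomial of `A_α(T)` of a mixed tree factors as the product of the
characteristic polynomials of the principal submatrices on the components obtained by
deleting all arcs. -/
theorem charpoly_Aalpha_eq_prod_components {n : ℕ} (α : ℝ) (hα : α ∈ Set.Icc (0:ℝ) 1)
    (A : Matrix (Fin n) (Fin n) ℝ) (hA : IsMixedAdj A) (htree : (underlying A).IsTree) :
    (Aalpha α A).charpoly =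
      ∏ c ∈ Finset.univ.image (undirPart A).connectedComponentMk,
        ((Aalpha α A).submatrix
          (fun i : {v // (undirPart A).connectedComponentMk v = c} => (i : Fin n))
          (fun j : {v // (undirPart A).connectedComponentMk v = c} => (j : Fin n))).charpoly :=
  charpoly_Aalpha_eq_prod_components_general α A hA htree
end

section
/- Let S be a mixed star of order n, size m, in which the center vertex 1 has out-degree m−n+k+1 for some 0 ≤ k ≤ 2n−m−2, with the m−n+1 undirected edges joining the center to vertices 2,...,m−n+2, arcs from the center to vertices m−n+3,...,m−n+k+2, and arcs from each remaining vertex to the center. Then for α ∈ [0,1], the A_α-spectral radius ρ_α(S) is the larger root of the quadratic (λ − α)(λ − α(m−n+k+1)) − (1−α)²(m−n+1). -/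
attribute [local instance] Classical.propDecidable

/-- The mixed star of order `n` and size `m` with center `0`: the `m-n+1` undirected edges
join the center to vertices `1, …, m-n+1`, there are arcs from the center to vertices
`m-n+2, …, m-n+k+1`, and arcs from every remaining vertex to the center.
(Here vertices are `0`-indexed, so vertex `i` is the paper's vertex `i+1`.) -/
noncomputable def starMat (n m k : ℕ) : Matrix (Fin n) (Fin n) ℝ :=
  Matrix.of fun i j =>
    if i.val = 0 ∧ 1 ≤ j.val ∧ j.val ≤ m - (n - 1) + k then 1
    else if j.val = 0 ∧ 1 ≤ i.val ∧ (i.val ≤ m - (n - 1) ∨ m - (n - 1) + k + 1 ≤ i.val) then 1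
    else 0


/-!
Let `c` be the centre of a mixed star, `S` its out-neighbours and `P` its in-neighbours, so
`S ∩ P` carries the undirected edges. If `v` is an eigenvector of `A_α` for an eigenvalue
`μ ∉ {0, α}`, then `v` vanishes off `P ∪ {c}`, satisfies `(μ - α) v i = (1 - α) v c` on `P`, and
the row of the centre forces `(μ - α)(μ - α|S|) = (1 - α)² |S ∩ P|`. So every eigenvalue is `0`,
`α` or a root of this quadratic, and its larger root `L` dominates `α` and the absolute value of
the other root. Conversely `(L - α) e_c + (1 - α) 𝟙_P` is an eigenvector for `L`; when it
vanishes, `L = α` and a coordinate vector `e_i` (`i ∈ P \ S`) or `e_c` is one instead.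
-/

open Finset Matrix

theorem isRoot_charpoly_iff_exists_mulVec_eq_smul {K ι : Type*} [Field K] [Fintype ι]
    [DecidableEq ι] (A : Matrix ι ι K) (μ : K) :
    A.charpoly.IsRoot μ ↔ ∃ v ≠ 0, A *ᵥ v = μ • v := by
  rw [← charpoly_toLin', ← Module.End.hasEigenvalue_iff_isRoot_charpoly,
    Module.End.hasEigenvalue_iff]
  simp only [Submodule.ne_bot_iff, Module.End.mem_eigenspace_iff, toLin'_apply]
  exact ⟨fun ⟨v, hv, hv0⟩ => ⟨v, hv0, hv⟩, fun ⟨v, hv0, hv⟩ => ⟨v, hv, hv0⟩⟩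

theorem specRad_eq_of_isRoot {ι : Type*} [Fintype ι] [DecidableEq ι] {M : Matrix ι ι ℝ}
    {L : ℝ} (hL : (M.map (fun x => (x : ℂ))).charpoly.IsRoot (L : ℂ)) (hL0 : 0 ≤ L)
    (hle : ∀ μ, (M.map (fun x => (x : ℂ))).charpoly.IsRoot μ → ‖μ‖ ≤ L) :
    specRad M = L := by
  refine IsGreatest.csSup_eq ⟨⟨L, hL, ?_⟩, ?_⟩
  · rw [Complex.norm_real, Real.norm_of_nonneg hL0]
  · rintro r ⟨μ, hμ, rfl⟩
    exact hle μ hμ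

theorem Fin.card_filter_one_le_le {n a : ℕ} (h : a < n) :
    #{j : Fin n | 1 ≤ (j : ℕ) ∧ (j : ℕ) ≤ a} = a := by
  have hsdiff : univ.filter (fun j : Fin n => 1 ≤ (j : ℕ) ∧ (j : ℕ) ≤ a) =
      univ.filter (fun j : Fin n => (j : ℕ) < a + 1) \
        univ.filter (fun j : Fin n => (j : ℕ) < 1) := by
    ext j; simp only [mem_filter, mem_univ, true_and, mem_sdiff]; omega
  rw [hsdiff, card_sdiff_of_subset (fun j => by simp only [mem_filter, mem_univ, true_and]; omega),
    Fin.card_filter_val_lt, Fin.card_filter_val_lt]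
  omega

section Quadratic

variable (a b c : ℝ)

/-- The larger root of `(x - a)(x - b) = c`, real when `0 ≤ c`. -/
noncomputable def bigRoot : ℝ := (a + b + √((a - b) ^ 2 + 4 * c)) / 2

noncomputable def smallRoot : ℝ := (a + b - √((a - b) ^ 2 + 4 * c)) / 2

variable {a b c}

theorem sub_mul_sub_sub_eq_sub_bigRoot_mul_sub_smallRoot (hc : 0 ≤ c) (x : ℂ) :
    (x - a) * (x - b) - c = (x - bigRoot a b c) * (x - smallRoot a b c) := by
  have hs : (√((a - b) ^ 2 + 4 * c) : ℂ) ^ 2 = (a - b) ^ 2 + 4 * c := by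
    exact_mod_cast Real.sq_sqrt (by positivity)
  simp only [bigRoot, smallRoot]
  push_cast
  linear_combination (1 / 4 : ℂ) * hs

theorem left_le_bigRoot (hc : 0 ≤ c) : a ≤ bigRoot a b c := by
  have := Real.le_sqrt_of_sq_le (show (a - b) ^ 2 ≤ (a - b) ^ 2 + 4 * c by linarith)
  rw [bigRoot]; linarith

theorem right_le_bigRoot (hc : 0 ≤ c) : b ≤ bigRoot a b c := by
  have := Real.le_sqrt_of_sq_le (show (b - a) ^ 2 ≤ (a - b) ^ 2 + 4 * c by nlinarith)
  rw [bigRoot]; linarith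

theorem smallRoot_le_bigRoot : smallRoot a b c ≤ bigRoot a b c := by
  have := Real.sqrt_nonneg ((a - b) ^ 2 + 4 * c)
  rw [smallRoot, bigRoot]; linarith

theorem abs_smallRoot_le_bigRoot (hab : 0 ≤ a + b) : |smallRoot a b c| ≤ bigRoot a b c := by
  have := Real.sqrt_nonneg ((a - b) ^ 2 + 4 * c)
  rw [abs_le, smallRoot, bigRoot]
  constructor <;> linarith

theorem bigRoot_isRoot (hc : 0 ≤ c) :
    (bigRoot a b c - a) * (bigRoot a b c - b) - c = 0 := by
  have := sub_mul_sub_sub_eq_sub_bigRoot_mul_sub_smallRoot (a := a) (b := b) hc (bigRoot a b c)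
  rw [sub_self, zero_mul] at this
  exact_mod_cast this

theorem le_bigRoot_of_isRoot (hc : 0 ≤ c) {x : ℝ} (hx : (x - a) * (x - b) - c = 0) :
    x ≤ bigRoot a b c := by
  have := sub_mul_sub_sub_eq_sub_bigRoot_mul_sub_smallRoot (a := a) (b := b) hc x
  rw [show ((x : ℂ) - a) * (x - b) - c = 0 by exact_mod_cast hx, eq_comm, mul_eq_zero,
    sub_eq_zero, sub_eq_zero] at this
  rcases this with h | h
  · exact (Complex.ofReal_injective h).le
  · exact (Complex.ofReal_injective h).le.trans smallRoot_le_bigRoot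

end Quadratic

section Star

variable {n : ℕ} (α : ℝ) {c : Fin n} {S P : Finset (Fin n)}

theorem Aalpha_map_mulVec_apply (A : Matrix (Fin n) (Fin n) ℝ) (v : Fin n → ℂ) (i : Fin n) :
    ((Aalpha α A).map (fun x => (x : ℂ)) *ᵥ v) i =
      α * (∑ j, (A i j : ℂ)) * v i + (1 - α) * ∑ j, (A i j : ℂ) * v j := by
  simp [Aalpha, mulVec, dotProduct, diagonal_apply, add_mul, sum_add_distrib, mul_sum, mul_assoc,
    apply_ite (fun x : ℝ => (x : ℂ)), ite_mul]

/-- The mixed star with centre `c`, arcs `c → j` for `j ∈ S` and `i → c` for `i ∈ P`;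
a vertex of `S ∩ P` is joined to `c` by an undirected edge. -/
def starAdj (c : Fin n) (S P : Finset (Fin n)) : Matrix (Fin n) (Fin n) ℝ :=
  Matrix.of fun i j => if i = c ∧ j ∈ S ∨ j = c ∧ i ∈ P then 1 else 0

theorem starAdj_sum_mul (hcS : c ∉ S) (hcP : c ∉ P) (w : Fin n → ℂ) (i : Fin n) :
    ∑ j, (starAdj c S P i j : ℂ) * w j =
      if i = c then ∑ j ∈ S, w j else if i ∈ P then w c else 0 := by
  by_cases hi : i = c
  · subst hi
    simp [starAdj, hcP, apply_ite (fun x : ℝ => (x : ℂ)), ite_mul, sum_ite_mem]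
  · by_cases hiP : i ∈ P <;>
      simp [starAdj, hi, hiP, apply_ite (fun x : ℝ => (x : ℂ)), ite_mul]

theorem starAalpha_mulVec_apply (hcS : c ∉ S) (hcP : c ∉ P) (v : Fin n → ℂ) (i : Fin n) :
    ((Aalpha α (starAdj c S P)).map (fun x => (x : ℂ)) *ᵥ v) i =
      if i = c then α * #S * v c + (1 - α) * ∑ j ∈ S, v j
      else if i ∈ P then (1 - α) * v c + α * v i else 0 := by
  have hdeg := starAdj_sum_mul hcS hcP 1 i
  simp only [Pi.one_apply, mul_one, sum_const, nsmul_eq_mul] at hdeg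
  rw [Aalpha_map_mulVec_apply, hdeg, starAdj_sum_mul hcS hcP]
  split_ifs with hi
  · subst hi; ring
  all_goals ring

theorem starAalpha_quad_eq_zero_of_mulVec_eq_smul (hcS : c ∉ S) (hcP : c ∉ P) {μ : ℂ}
    {v : Fin n → ℂ} (hv : v ≠ 0)
    (hμv : (Aalpha α (starAdj c S P)).map (fun x => (x : ℂ)) *ᵥ v = μ • v)
    (hμ0 : μ ≠ 0) (hμα : μ ≠ α) :
    (μ - α) * (μ - α * #S) - (1 - α) ^ 2 * #(S ∩ P) = 0 := by
  have hrow i := congrFun hμv i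
  simp only [starAalpha_mulVec_apply α hcS hcP, Pi.smul_apply, smul_eq_mul] at hrow
  have hout : ∀ i ≠ c, i ∉ P → v i = 0 := fun i hic hiP => by
    simpa [hic, hiP, hμ0] using hrow i
  have hin : ∀ i ∈ P, (μ - α) * v i = (1 - α) * v c := fun i hiP => by
    have := hrow i
    rw [if_neg (ne_of_mem_of_not_mem hiP hcP), if_pos hiP] at this
    linear_combination -this
  have hvc : v c ≠ 0 := by
    refine fun h0 => hv (funext fun i => ?_)
    by_cases hic : i = c
    · rw [hic, h0, Pi.zero_apply]
    by_cases hiP : i ∈ P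
    · simpa [h0, sub_eq_zero, hμα] using hin i hiP
    · exact hout i hic hiP
  have hsum : (μ - α) * ∑ j ∈ S, v j = #(S ∩ P) * ((1 - α) * v c) := by
    rw [mul_sum, sum_congr rfl (g := fun j => if j ∈ P then (1 - α) * v c else 0), sum_ite_mem,
      sum_const, nsmul_eq_mul]
    intro j hjS
    split_ifs with hjP
    · exact hin j hjP
    · rw [hout j (ne_of_mem_of_not_mem hjS hcS) hjP, mul_zero]
  have hcenter := hrow c
  rw [if_pos rfl] at hcenter
  have : ((μ - α) * (μ - α * #S) - (1 - α) ^ 2 * #(S ∩ P)) * v c = 0 := by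
    linear_combination (1 - α) * hsum - (μ - α) * hcenter
  exact (mul_eq_zero.mp this).resolve_right hvc

variable (c P) in
def starEigenvector (x : ℂ) : Fin n → ℂ :=
  fun i => if i = c then x - α else if i ∈ P then 1 - α else 0

theorem starAalpha_mulVec_starEigenvector (hcS : c ∉ S) (hcP : c ∉ P) {x : ℂ}
    (hx : (x - α) * (x - α * #S) - (1 - α) ^ 2 * #(S ∩ P) = 0) :
    (Aalpha α (starAdj c S P)).map (fun x => (x : ℂ)) *ᵥ starEigenvector α c P x =
      x • starEigenvector α c P x := by
  have hsum : ∑ j ∈ S, starEigenvector α c P x j = #(S ∩ P) * (1 - α) := by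
    rw [sum_congr rfl (g := fun j => if j ∈ P then 1 - (α : ℂ) else 0), sum_ite_mem, sum_const,
      nsmul_eq_mul]
    intro j hjS
    rw [starEigenvector, if_neg (ne_of_mem_of_not_mem hjS hcS)]
  ext i
  rw [starAalpha_mulVec_apply α hcS hcP, Pi.smul_apply, smul_eq_mul]
  by_cases hic : i = c
  · subst hic
    rw [hsum]
    simp only [starEigenvector, ↓reduceIte]
    linear_combination -hx
  by_cases hiP : i ∈ P <;> simp only [starEigenvector, hic, hiP, ↓reduceIte] <;> ring

theorem starAalpha_mulVec_single_of_mem_sdiff (hcS : c ∉ S) (hcP : c ∉ P) {i : Fin n}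
    (hi : i ∈ P \ S) :
    (Aalpha α (starAdj c S P)).map (fun x => (x : ℂ)) *ᵥ Pi.single i 1 =
      (α : ℂ) • Pi.single i 1 := by
  rw [mem_sdiff] at hi
  have hic : i ≠ c := ne_of_mem_of_not_mem hi.1 hcP
  ext j
  rw [starAalpha_mulVec_apply α hcS hcP, Pi.smul_apply, smul_eq_mul]
  by_cases hji : j = i
  · subst hji; simp [hic, hi.1]
  · split_ifs with hjc hjP <;> simp [hji, Pi.single_apply, hjc, hic.symm, hi.2]

theorem starAalpha_mulVec_single_center (hcS : c ∉ S) (hcP : c ∉ P) (h : α = 1 ∨ P = ∅) :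
    (Aalpha α (starAdj c S P)).map (fun x => (x : ℂ)) *ᵥ Pi.single c 1 =
      (α * #S : ℂ) • Pi.single c 1 := by
  ext j
  rw [starAalpha_mulVec_apply α hcS hcP, Pi.smul_apply, smul_eq_mul]
  split_ifs with hjc hjP
  · subst hjc; simp [Pi.single_apply, hcS]
  · rcases h with rfl | rfl
    · simp [hjc]
    · simp at hjP
  · simp [hjc]

theorem norm_le_bigRoot_of_isRoot_starAalpha (hcS : c ∉ S) (hcP : c ∉ P) (hα : 0 ≤ α)
    {μ : ℂ} (hμ : ((Aalpha α (starAdj c S P)).map (fun x => (x : ℂ))).charpoly.IsRoot μ) :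
    ‖μ‖ ≤ bigRoot α (α * #S) ((1 - α) ^ 2 * #(S ∩ P)) := by
  have hc : 0 ≤ (1 - α) ^ 2 * #(S ∩ P) := by positivity
  have hαL := left_le_bigRoot (a := α) (b := α * #S) hc
  by_cases hμ0 : μ = 0
  · simpa [hμ0] using hα.trans hαL
  by_cases hμα : μ = α
  · rwa [hμα, Complex.norm_real, Real.norm_of_nonneg hα]
  obtain ⟨v, hv, hμv⟩ := (isRoot_charpoly_iff_exists_mulVec_eq_smul _ μ).mp hμ
  have hq := starAalpha_quad_eq_zero_of_mulVec_eq_smul α hcS hcP hv hμv hμ0 hμα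
  have hfac := sub_mul_sub_sub_eq_sub_bigRoot_mul_sub_smallRoot (a := α) (b := α * #S) hc μ
  push_cast at hfac
  rw [hfac, mul_eq_zero, sub_eq_zero, sub_eq_zero] at hq
  rcases hq with rfl | rfl
  · rw [Complex.norm_real, Real.norm_of_nonneg (hα.trans hαL)]
  · rw [Complex.norm_real, Real.norm_eq_abs]
    exact abs_smallRoot_le_bigRoot (by positivity)

theorem isRoot_charpoly_starAalpha_bigRoot (hcS : c ∉ S) (hcP : c ∉ P) (hα : 0 ≤ α)
    (hSP : (S ∪ P).Nonempty) :
    ((Aalpha α (starAdj c S P)).map (fun x => (x : ℂ))).charpoly.IsRoot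
      (bigRoot α (α * #S) ((1 - α) ^ 2 * #(S ∩ P)) : ℂ) := by
  set L := bigRoot α (α * #S) ((1 - α) ^ 2 * #(S ∩ P))
  have hc : 0 ≤ (1 - α) ^ 2 * #(S ∩ P) := by positivity
  have hq : ((L : ℂ) - α) * (L - α * #S) - (1 - α) ^ 2 * #(S ∩ P) = 0 := by
    exact_mod_cast bigRoot_isRoot (a := α) (b := α * #S) hc
  rw [isRoot_charpoly_iff_exists_mulVec_eq_smul]
  by_cases hu : starEigenvector α c P L ≠ 0
  · exact ⟨_, hu, starAalpha_mulVec_starEigenvector α hcS hcP hq⟩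
  rw [not_not, funext_iff] at hu
  have hLα : L = α := by
    have := hu c
    simp only [starEigenvector, ↓reduceIte, Pi.zero_apply, sub_eq_zero] at this
    exact_mod_cast this
  have hαP : α = 1 ∨ P = ∅ := by
    refine or_iff_not_imp_right.mpr fun hP => ?_
    obtain ⟨i, hi⟩ := nonempty_iff_ne_empty.mpr hP
    have := hu i
    simp only [starEigenvector, ne_of_mem_of_not_mem hi hcP, hi, ↓reduceIte, Pi.zero_apply,
      sub_eq_zero] at this
    exact_mod_cast this.symm
  obtain ⟨i, hi⟩ | hPS := (P \ S).eq_empty_or_nonempty.symm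
  · refine ⟨Pi.single i 1, by simp, ?_⟩
    rw [hLα]
    exact starAalpha_mulVec_single_of_mem_sdiff α hcS hcP hi
  · have hS : 1 ≤ #S := by
      rw [sdiff_eq_empty_iff_subset] at hPS
      rwa [union_eq_left.mpr hPS, ← card_pos] at hSP
    have hLd : L = α * #S := le_antisymm
      (by rw [hLα]; exact le_mul_of_one_le_right hα (by exact_mod_cast hS))
      (right_le_bigRoot hc)
    refine ⟨Pi.single c 1, by simp, ?_⟩
    rw [hLd]
    push_cast
    exact starAalpha_mulVec_single_center α hcS hcP hαP

theorem specRad_Aalpha_starAdj (hcS : c ∉ S) (hcP : c ∉ P) (hα : 0 ≤ α)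
    (hSP : (S ∪ P).Nonempty) :
    specRad (Aalpha α (starAdj c S P)) = bigRoot α (α * #S) ((1 - α) ^ 2 * #(S ∩ P)) :=
  specRad_eq_of_isRoot (isRoot_charpoly_starAalpha_bigRoot α hcS hcP hα hSP)
    (hα.trans (left_le_bigRoot (by positivity)))
    (fun _ => norm_le_bigRoot_of_isRoot_starAalpha α hcS hcP hα)

end Star

theorem starMat_eq_starAdj (n m k : ℕ) (hn : 0 < n) :
    starMat n m k = starAdj ⟨0, hn⟩ {j | 1 ≤ (j : ℕ) ∧ (j : ℕ) ≤ m - (n - 1) + k}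
      {i | 1 ≤ (i : ℕ) ∧ ((i : ℕ) ≤ m - (n - 1) ∨ m - (n - 1) + k + 1 ≤ (i : ℕ))} := by
  ext i j
  simp only [starMat, starAdj, of_apply, mem_filter, mem_univ, true_and, Fin.ext_iff]
  split_ifs <;> first | rfl | (exfalso; omega)

/-- The `A_α`-spectral radius of the mixed star of order `n`, size `m` and center
out-degree `m-n+k+1` is the larger root of
`(λ-α)(λ-α(m-n+k+1)) - (1-α)²(m-n+1)`. -/
theorem specRad_starMat {n m k : ℕ} (hn : 2 ≤ n) (hm₁ : n - 1 ≤ m) (hm₂ : m ≤ 2 * n - 2)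
    (hk : k ≤ 2 * n - m - 2) (α : ℝ) (hα : α ∈ Set.Icc (0:ℝ) 1) :
    (specRad (Aalpha α (starMat n m k)) - α) *
        (specRad (Aalpha α (starMat n m k)) - α * ((m : ℝ) - n + k + 1)) -
        (1 - α) ^ 2 * ((m : ℝ) - n + 1) = 0 ∧
    ∀ x : ℝ, (x - α) * (x - α * ((m : ℝ) - n + k + 1)) - (1 - α) ^ 2 * ((m : ℝ) - n + 1) = 0 →
      x ≤ specRad (Aalpha α (starMat n m k)) := by
  rw [starMat_eq_starAdj n m k (by omega)]
  set t := m - (n - 1) with ht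
  have htR : (t : ℝ) = m - n + 1 := by
    rw [ht, Nat.cast_sub hm₁, Nat.cast_sub (by omega : 1 ≤ n)]; push_cast; ring
  have hdR : ((t + k : ℕ) : ℝ) = m - n + k + 1 := by push_cast; rw [htR]; ring
  have hinter : univ.filter (fun j : Fin n => 1 ≤ (j : ℕ) ∧ (j : ℕ) ≤ t + k) ∩
      univ.filter (fun i : Fin n => 1 ≤ (i : ℕ) ∧ ((i : ℕ) ≤ t ∨ t + k + 1 ≤ (i : ℕ))) =
      univ.filter fun j : Fin n => 1 ≤ (j : ℕ) ∧ (j : ℕ) ≤ t := by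
    ext j; simp only [mem_inter, mem_filter, mem_univ, true_and]; omega
  have hc : 0 ≤ (1 - α) ^ 2 * ((m : ℝ) - n + 1) := by rw [← htR]; positivity
  rw [specRad_Aalpha_starAdj α (by simp) (by simp) hα.1
      ⟨⟨1, by omega⟩, by simp only [mem_union, mem_filter, mem_univ, true_and]; omega⟩,
    hinter, Fin.card_filter_one_le_le (by omega), Fin.card_filter_one_le_le (by omega),
    hdR, htR]
  exact ⟨bigRoot_isRoot hc, fun x => le_bigRoot_of_isRoot hc⟩
end

section
/- Let T be a mixed tree and a, b distinct vertices of T with no arc between them. Then the Kelmans transformation T_b^a is again a mixed tree if and only if either there is an undirected edge ab in T, or the distance between a and b in the underlying tree is 2 and the unique common neighbor x of a and b satisfies one of: (i) ax is an undirected edge, (ii) xb is an undirected edge, (iii) both a→x and b→x are arcs, or (iv) both x→a and x→b are arcs. -/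
attribute [local instance] Classical.propDecidable

/-!
Write `T` for the underlying tree and `T'` for the underlying graph of the transform.
In `T'` every neighbour of `b` in `T` becomes a neighbour of `a`, and `b` keeps only the edge `ab`
and the common neighbours `x` of `a` and `b` with `A x a = A x b = 1` or `A a x = A b x = 1`.
Hence `T'` has at most as many edges as `T`, and collapsing `b` onto `a` shows that all vertices
other than `b` stay connected in `T'`. So `T'` is a tree iff it is connected iff `b` keeps a
neighbour; the four cases of the statement spell out the condition on the common neighbour.
-/

namespace SimpleGraph

variable {V : Type*} {G H : SimpleGraph V}

lemma isTree_of_connected_of_ncard_edgeSet_le [Finite V] (hH : H.IsTree) (hG : G.Connected)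
    (hcard : G.edgeSet.ncard ≤ H.edgeSet.ncard) : G.IsTree := by
  rw [isTree_iff_connected_and_card, Nat.card_coe_set_eq] at hH ⊢
  exact ⟨hG, le_antisymm (by omega) hG.card_vert_le_card_edgeSet_add_one⟩

lemma dist_eq_two_of_adj_of_adj {a b x : V} (hab : a ≠ b) (hnadj : ¬G.Adj a b) (hax : G.Adj a x)
    (hxb : G.Adj x b) : G.dist a b = 2 := by
  simp [dist, edist_eq_two_iff.2 ⟨hab, hnadj, x, hax, hxb.symm⟩]

lemma connected_iff_exists_adj_of_reachable {a b : V} (hab : a ≠ b)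
    (h : ∀ u v, u ≠ b → v ≠ b → G.Reachable u v) : G.Connected ↔ ∃ w, G.Adj w b := by
  refine ⟨fun hG => ?_, fun ⟨w, hwb⟩ => ?_⟩
  · obtain ⟨_ | ⟨hbw, _⟩⟩ := hG.preconnected b a
    · exact absurd rfl hab
    · exact ⟨_, hbw.symm⟩
  · have hreach : ∀ u, G.Reachable u b := fun u =>
      if hub : u = b then hub ▸ .rfl else (h u w hub hwb.ne).trans hwb.reachable
    exact (connected_iff_exists_forall_reachable G).2 ⟨b, fun u => (hreach u).symm⟩

lemma Reachable.map_of_adj {W : Type*} {G' : SimpleGraph W} (f : V → W)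
    (hf : ∀ u v, G.Adj u v → G'.Reachable (f u) (f v)) {u v : V} (huv : G.Reachable u v) :
    G'.Reachable (f u) (f v) := by
  rw [reachable_iff_reflTransGen] at huv ⊢
  exact huv.lift' f fun x y hxy => (reachable_iff_reflTransGen _ _).1 (hf x y hxy)

end SimpleGraph

open SimpleGraph

section KelmansAdj

variable {n : ℕ} {A : Matrix (Fin n) (Fin n) ℝ} {a b : Fin n}

lemma underlying_kelmansG_adj_of_ne {i j : Fin n} (hia : i ≠ a) (hib : i ≠ b) (hja : j ≠ a)
    (hjb : j ≠ b) : (underlying (kelmansG A a b)).Adj i j ↔ (underlying A).Adj i j := by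
  simp [underlying, kelmansG, hia, hib, hja, hjb]

lemma underlying_kelmansG_adj_a (hA : IsMixedAdj A) {i : Fin n} (hia : i ≠ a) (hib : i ≠ b) :
    (underlying (kelmansG A a b)).Adj i a ↔
      (underlying A).Adj i a ∨ (underlying A).Adj i b := by
  simp only [underlying, kelmansG, Matrix.of_apply]
  rcases hA.1 i a with h1 | h1 <;> rcases hA.1 i b with h2 | h2 <;>
    rcases hA.1 a i with h3 | h3 <;> rcases hA.1 b i with h4 | h4 <;>
    simp [h1, h2, h3, h4, hia, hib]

lemma underlying_kelmansG_adj_b (hA : IsMixedAdj A) (hab : a ≠ b) {i : Fin n} (hia : i ≠ a)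
    (hib : i ≠ b) : (underlying (kelmansG A a b)).Adj i b ↔
      (A i a = 1 ∧ A i b = 1) ∨ (A a i = 1 ∧ A b i = 1) := by
  simp only [underlying, kelmansG, Matrix.of_apply]
  rcases hA.1 i a with h1 | h1 <;> rcases hA.1 i b with h2 | h2 <;>
    rcases hA.1 a i with h3 | h3 <;> rcases hA.1 b i with h4 | h4 <;>
    simp [h1, h2, h3, h4, hia, hib, hab.symm]

lemma underlying_adj_of_underlying_kelmansG_adj_b (hA : IsMixedAdj A) (hab : a ≠ b) {i : Fin n}
    (hia : i ≠ a) (hib : i ≠ b) (h : (underlying (kelmansG A a b)).Adj i b) :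
    (underlying A).Adj i a ∧ (underlying A).Adj i b := by
  rcases (underlying_kelmansG_adj_b hA hab hia hib).1 h with ⟨h1, h2⟩ | ⟨h1, h2⟩
  · exact ⟨⟨hia, .inl h1⟩, ⟨hib, .inl h2⟩⟩
  · exact ⟨⟨hia, .inr h1⟩, ⟨hib, .inr h2⟩⟩

lemma underlying_kelmansG_adj_a_b (hab : a ≠ b) :
    (underlying (kelmansG A a b)).Adj a b ↔ (underlying A).Adj a b := by
  simp [underlying, kelmansG, hab, hab.symm]

end KelmansAdj

section KelmansConnected

variable {n : ℕ} {A : Matrix (Fin n) (Fin n) ℝ} {a b : Fin n}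

lemma underlying_kelmansG_adj_collapse (hA : IsMixedAdj A) {u v : Fin n}
    (hua : u ≠ a) (hub : u ≠ b) (huv : (underlying A).Adj u v) :
    (underlying (kelmansG A a b)).Adj u (if v = b then a else v) := by
  by_cases hvb : v = b
  · subst hvb
    simpa using (underlying_kelmansG_adj_a hA hua hub).2 (Or.inr huv)
  by_cases hva : v = a
  · subst hva
    simpa [hvb] using (underlying_kelmansG_adj_a hA hua hub).2 (Or.inl huv)
  simpa [hvb] using (underlying_kelmansG_adj_of_ne hua hub hva hvb).2 huv

lemma underlying_kelmansG_reachable (hA : IsMixedAdj A) (hT : (underlying A).Connected)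
    {u v : Fin n} (hub : u ≠ b) (hvb : v ≠ b) :
    (underlying (kelmansG A a b)).Reachable u v := by
  set f : Fin n → Fin n := fun x => if x = b then a else x
  have hf : ∀ x y, (underlying A).Adj x y →
      (underlying (kelmansG A a b)).Reachable (f x) (f y) := by
    intro x y hxy
    have hpair : ∀ z, z = a ∨ z = b → f z = a := by rintro z (rfl | rfl) <;> simp [f]
    by_cases hx : x = a ∨ x = b
    · by_cases hy : y = a ∨ y = b
      · rw [hpair x hx, hpair y hy]
      · obtain ⟨hya, hyb⟩ := not_or.1 hy
        have := underlying_kelmansG_adj_collapse hA hya hyb hxy.symm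
        simpa [f, hyb] using this.symm.reachable
    · obtain ⟨hxa, hxb⟩ := not_or.1 hx
      simpa [f, hxb] using (underlying_kelmansG_adj_collapse hA hxa hxb hxy).reachable
  simpa [f, hub, hvb] using (hT.preconnected u v).map_of_adj f hf

end KelmansConnected

section KelmansCard

variable {n : ℕ} {A : Matrix (Fin n) (Fin n) ℝ} {a b : Fin n}

lemma underlying_adj_of_underlying_kelmansG_adj (hA : IsMixedAdj A) (hab : a ≠ b) {x y : Fin n}
    (hxa : x ≠ a) (hya : y ≠ a) (h : (underlying (kelmansG A a b)).Adj x y) :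
    (underlying A).Adj x y := by
  by_cases hxb : x = b
  · subst hxb
    exact ((underlying_adj_of_underlying_kelmansG_adj_b hA hab hya h.ne.symm h.symm).2).symm
  by_cases hyb : y = b
  · subst hyb
    exact (underlying_adj_of_underlying_kelmansG_adj_b hA hab hxa hxb h).2
  exact (underlying_kelmansG_adj_of_ne hxa hxb hya hyb).1 h

lemma exists_eq_of_mem_edgeSet_underlying_kelmansG (hA : IsMixedAdj A) (hab : a ≠ b)
    {e : Sym2 (Fin n)} (he : e ∈ (underlying (kelmansG A a b)).edgeSet)
    (hT : e ∉ (underlying A).edgeSet) :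
    ∃ z, e = s(a, z) ∧ z ≠ a ∧ ¬(underlying A).Adj z a ∧ (underlying A).Adj z b := by
  suffices key : ∀ z, (underlying (kelmansG A a b)).Adj a z → ¬(underlying A).Adj a z →
      z ≠ a ∧ ¬(underlying A).Adj z a ∧ (underlying A).Adj z b by
    induction e using Sym2.ind with
    | _ x y =>
      by_cases hxa : x = a
      · subst hxa; exact ⟨y, rfl, key y he hT⟩
      by_cases hya : y = a
      · subst hya; exact ⟨x, Sym2.eq_swap, key x he.symm fun h => hT h.symm⟩
      exact absurd (underlying_adj_of_underlying_kelmansG_adj hA hab hxa hya he) hT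
  intro z hz hTz
  have hzb : z ≠ b := by rintro rfl; exact hTz ((underlying_kelmansG_adj_a_b hab).1 hz)
  refine ⟨hz.ne.symm, fun h => hTz h.symm, ?_⟩
  exact ((underlying_kelmansG_adj_a hA hz.ne.symm hzb).1 hz.symm).resolve_left fun h => hTz h.symm

lemma ncard_edgeSet_underlying_kelmansG_le (hA : IsMixedAdj A) (hab : a ≠ b) :
    (underlying (kelmansG A a b)).edgeSet.ncard ≤ (underlying A).edgeSet.ncard := by
  -- a moved edge `{a, z}` of `T'` goes back to the edge `{b, z}` of `T`
  let φ : Sym2 (Fin n) → Sym2 (Fin n) := fun e =>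
    if e ∈ (underlying A).edgeSet then e else e.map (Equiv.swap a b)
  have hmoved : ∀ e ∈ (underlying (kelmansG A a b)).edgeSet, e ∉ (underlying A).edgeSet →
      ∃ z, φ e = s(b, z) ∧ z ≠ a ∧
        ¬(underlying A).Adj z a ∧ (underlying A).Adj z b := by
    intro e he hT
    obtain ⟨z, rfl, hz, hza, hzb⟩ :=
      exists_eq_of_mem_edgeSet_underlying_kelmansG hA hab he hT
    refine ⟨z, ?_, hz, hza, hzb⟩
    simp only [φ, if_neg hT, Sym2.map_mk, Equiv.swap_apply_left,
      Equiv.swap_apply_of_ne_of_ne hz hzb.ne]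
  have hcross : ∀ {e₁ e₂}, e₁ ∈ (underlying (kelmansG A a b)).edgeSet →
      e₁ ∈ (underlying A).edgeSet → e₂ ∈ (underlying (kelmansG A a b)).edgeSet →
      e₂ ∉ (underlying A).edgeSet → φ e₁ ≠ φ e₂ := by
    intro e₁ e₂ he₁ hT₁ he₂ hT₂ h
    obtain ⟨z, hφ, hz, hza, hzb⟩ := hmoved e₂ he₂ hT₂
    rw [show φ e₁ = e₁ from if_pos hT₁, hφ] at h
    subst h
    exact hza (underlying_adj_of_underlying_kelmansG_adj_b hA hab hz hzb.ne he₁.symm).1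
  refine Set.ncard_le_ncard_of_injOn φ (fun e he => ?_) (fun e₁ he₁ e₂ he₂ h => ?_)
  · by_cases hT : e ∈ (underlying A).edgeSet
    · simp [φ, hT]
    obtain ⟨z, hφ, -, -, hzb⟩ := hmoved e he hT
    exact hφ ▸ hzb.symm
  · by_cases hT₁ : e₁ ∈ (underlying A).edgeSet <;>
      by_cases hT₂ : e₂ ∈ (underlying A).edgeSet
    · simpa [φ, hT₁, hT₂] using h
    · exact absurd h (hcross he₁ hT₁ he₂ hT₂)
    · exact absurd h.symm (hcross he₂ hT₂ he₁ hT₁)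
    · simp only [φ, if_neg hT₁, if_neg hT₂] at h
      exact Sym2.map.injective (Equiv.injective _) h

end KelmansCard

section KelmansTree

variable {n : ℕ} {A : Matrix (Fin n) (Fin n) ℝ} {a b : Fin n}

lemma exists_underlying_kelmansG_adj_b_iff (hA : IsMixedAdj A) (hab : a ≠ b) :
    (∃ w, (underlying (kelmansG A a b)).Adj w b) ↔ (underlying A).Adj a b ∨
      ∃ x, (underlying A).Adj a x ∧ (underlying A).Adj x b ∧
        ((A x a = 1 ∧ A x b = 1) ∨ (A a x = 1 ∧ A b x = 1)) := by
  constructor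
  · rintro ⟨w, hw⟩
    by_cases hwa : w = a
    · exact .inl ((underlying_kelmansG_adj_a_b hab).1 (hwa ▸ hw))
    have hwb := hw.ne
    obtain ⟨hTwa, hTwb⟩ := underlying_adj_of_underlying_kelmansG_adj_b hA hab hwa hwb hw
    exact .inr ⟨w, hTwa.symm, hTwb, (underlying_kelmansG_adj_b hA hab hwa hwb).1 hw⟩
  · rintro (hT | ⟨x, hax, hxb, hx⟩)
    · exact ⟨a, (underlying_kelmansG_adj_a_b hab).2 hT⟩
    · exact ⟨x, (underlying_kelmansG_adj_b hA hab hax.ne.symm hxb.ne).2 hx⟩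

lemma IsMixedAdj.common_orientation_iff (hA : IsMixedAdj A) {x : Fin n}
    (hax : (underlying A).Adj a x) (hxb : (underlying A).Adj x b) :
    ((A x a = 1 ∧ A x b = 1) ∨ (A a x = 1 ∧ A b x = 1)) ↔
      ((A a x = 1 ∧ A x a = 1) ∨ (A x b = 1 ∧ A b x = 1) ∨
        (A a x = 1 ∧ A x a = 0 ∧ A b x = 1 ∧ A x b = 0) ∨
        (A x a = 1 ∧ A a x = 0 ∧ A x b = 1 ∧ A b x = 0)) := by
  have hax := hax.2
  have hxb := hxb.2
  rcases hA.1 a x with h1 | h1 <;> rcases hA.1 x a with h2 | h2 <;>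
    rcases hA.1 x b with h3 | h3 <;> rcases hA.1 b x with h4 | h4 <;>
    simp_all

end KelmansTree

/-- Characterization of when the Kelmans transformation of a mixed tree is again a
mixed tree: either `ab` is an undirected edge, or `a` and `b` are at distance `2` and the
common neighbor `x` satisfies one of the four listed conditions. -/
theorem kelmansG_isTree_iff {n : ℕ} (A : Matrix (Fin n) (Fin n) ℝ) (hA : IsMixedAdj A)
    (htree : (underlying A).IsTree) (a b : Fin n) (hab : a ≠ b)
    (hnoarc : A a b = A b a) :
    (underlying (kelmansG A a b)).IsTree ↔
      ((A a b = 1 ∧ A b a = 1) ∨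
       ((underlying A).dist a b = 2 ∧
        ∃ x : Fin n, (underlying A).Adj a x ∧ (underlying A).Adj x b ∧
          ((A a x = 1 ∧ A x a = 1) ∨
           (A x b = 1 ∧ A b x = 1) ∨
           (A a x = 1 ∧ A x a = 0 ∧ A b x = 1 ∧ A x b = 0) ∨
           (A x a = 1 ∧ A a x = 0 ∧ A x b = 1 ∧ A b x = 0)))) := by
  have hconn := connected_iff_exists_adj_of_reachable hab
    fun _ _ hu hv => underlying_kelmansG_reachable (a := a) hA htree.connected hu hv
  have hisTree :
      (underlying (kelmansG A a b)).IsTree ↔ (underlying (kelmansG A a b)).Connected :=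
    ⟨IsTree.connected, fun h => isTree_of_connected_of_ncard_edgeSet_le htree h
      (ncard_edgeSet_underlying_kelmansG_le hA hab)⟩
  rw [hisTree, hconn, exists_underlying_kelmansG_adj_b_iff hA hab]
  by_cases hadj : (underlying A).Adj a b
  · have hedge : A a b = 1 := hadj.2.elim id (hnoarc ▸ id)
    simp [hadj, hedge, ← hnoarc]
  have hedge : ¬(A a b = 1 ∧ A b a = 1) := fun h => hadj ⟨hab, .inl h.1⟩
  simp only [hadj, hedge, false_or]
  constructor
  · rintro ⟨x, hax, hxb, hx⟩
    exact ⟨dist_eq_two_of_adj_of_adj hab hadj hax hxb, x, hax, hxb,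
      (hA.common_orientation_iff hax hxb).1 hx⟩
  · rintro ⟨-, x, hax, hxb, hx⟩
    exact ⟨x, hax, hxb, (hA.common_orientation_iff hax hxb).2 hx⟩
end
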